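/- arXiv:2012.15542 — 2 statements merged into one kernel-verified Lean document; each statement's English description precedes it below -/
import Mathlib

section
/- Let (V,E) be an unrooted leafless directed tree with a free left end, λ ∈ 𝕂 nonzero, X = ℓ^p(V) with 1 < p < ∞, and suppose λB is bounded on X. If |λ| ≥ 1 then λB is not hypercyclic on X. -/
open scoped ENNReal
open Filter

/-- Iterated parent map of a partially defined parent function. -/
def parIter {V : Type*} (par : V → Option V) : ℕ → V → Option V
  | 0, v => some v
  | n + 1, v => (par v).bind (parIter par n)

/-- A directed tree: each vertex has at most one parent (the map `par`),
the graph is connected (any two vertices have a common ancestor), and has no cycles. -/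
structure DirTree (V : Type*) : Type _ where
  par : V → Option V
  connected : ∀ u v : V, ∃ m n : ℕ, ∃ w : V,
    parIter par m u = some w ∧ parIter par n v = some w
  acyclic : ∀ (v : V) (n : ℕ), parIter par (n + 1) v ≠ some v

namespace DirTree

variable {V : Type*} (t : DirTree V)

/-- The set of children of a vertex. -/
def children (v : V) : Set V := {u | t.par u = some v}

/-- `desc n v` is `Chi^n(v)`, the set of `n`-th generation descendants of `v`. -/
def desc (n : ℕ) (v : V) : Set V := {u | parIter t.par n u = some v}

def IsRoot (v : V) : Prop := t.par v = none

def Rooted : Prop := ∃ v, t.IsRoot v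

def Unrooted : Prop := ∀ v : V, t.par v ≠ none

/-- The tree has no leaves: every vertex has a child. -/
def Leafless : Prop := ∀ v : V, ∃ u, t.par u = some v

variable {𝕂 : Type*} [RCLike 𝕂]

/-- The weighted backward shift `B_λ`: `(B_λ f)(v) = ∑_{u ∈ Chi(v)} λ_u f(u)`. -/
noncomputable def bshift (lam : V → 𝕂) (f : V → 𝕂) : V → 𝕂 :=
  fun v => ∑' u : t.children v, lam u * f u

/-- The weighted forward shift `S_λ`: `(S_λ f)(v) = λ_v f(par v)` for `v ≠ root`, `0` at the root. -/
noncomputable def fshift (lam : V → 𝕂) (f : V → 𝕂) : V → 𝕂 :=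
  fun v => (t.par v).elim 0 (fun w => lam v * f w)

/-- `wprod lam n u = λ(par^n(u) → u)`, the product of the weights along the branch
from `par^n(u)` down to `u`. -/
noncomputable def wprod (lam : V → 𝕂) (n : ℕ) (u : V) : 𝕂 :=
  ∏ k ∈ Finset.range n, ((parIter t.par k u).elim 1 lam)

end DirTree

/-- The `ℓ^p(V,μ)`-norm (with values in `ℝ≥0∞`): for `p = ∞` the weighted sup norm,
otherwise `(∑_v ‖f(v) μ_v‖^p)^{1/p}`. -/
noncomputable def enormW {V 𝕂 : Type*} [RCLike 𝕂] (μ : V → 𝕂) (p : ℝ≥0∞) (f : V → 𝕂) :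
    ℝ≥0∞ :=
  if p = ∞ then ⨆ v, (‖μ v * f v‖₊ : ℝ≥0∞)
  else (∑' v, (‖μ v * f v‖₊ : ℝ≥0∞) ^ p.toReal) ^ (1 / p.toReal)

/-- Membership in `ℓ^p(V,μ)`. -/
def MemWLp {V 𝕂 : Type*} [RCLike 𝕂] (μ : V → 𝕂) (p : ℝ≥0∞) (f : V → 𝕂) : Prop :=
  enormW μ p f ≠ ∞

/-- Membership in `c₀(V,μ)`: the weighted function vanishes at infinity. -/
def MemC0 {V 𝕂 : Type*} [RCLike 𝕂] (μ : V → 𝕂) (f : V → 𝕂) : Prop :=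
  Tendsto (fun v => ‖μ v * f v‖) cofinite (nhds 0)

/-- `T` is a bounded operator with respect to the norm `nrm`. -/
def BoundedOn {V 𝕂 : Type*} [RCLike 𝕂] (T : (V → 𝕂) → (V → 𝕂))
    (nrm : (V → 𝕂) → ℝ≥0∞) : Prop :=
  ∃ C : ℝ≥0∞, C ≠ ∞ ∧ ∀ f, nrm (T f) ≤ C * nrm f

/-- The operator norm of `T` with respect to the norm `nrm`. -/
noncomputable def opNorm {V 𝕂 : Type*} [RCLike 𝕂] (T : (V → 𝕂) → (V → 𝕂))
    (nrm : (V → 𝕂) → ℝ≥0∞) : ℝ≥0∞ :=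
  sInf {C : ℝ≥0∞ | ∀ f, nrm (T f) ≤ C * nrm f}

/-- `T` is hypercyclic on the space `{f | mem f}` with metric induced by `nrm`:
some `f` in the space has dense orbit. -/
def HypercyclicOn {V 𝕂 : Type*} [RCLike 𝕂] (T : (V → 𝕂) → (V → 𝕂))
    (mem : (V → 𝕂) → Prop) (nrm : (V → 𝕂) → ℝ≥0∞) : Prop :=
  ∃ f, mem f ∧ ∀ g, mem g → ∀ ε : ℝ≥0∞, 0 < ε → ∃ n : ℕ, nrm (T^[n] f - g) < ε

/-- `T` is weakly mixing: `T ⊕ T` is hypercyclic on the product. -/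
def WeaklyMixingOn {V 𝕂 : Type*} [RCLike 𝕂] (T : (V → 𝕂) → (V → 𝕂))
    (mem : (V → 𝕂) → Prop) (nrm : (V → 𝕂) → ℝ≥0∞) : Prop :=
  ∃ f₁ f₂, mem f₁ ∧ mem f₂ ∧ ∀ g₁ g₂, mem g₁ → mem g₂ → ∀ ε : ℝ≥0∞, 0 < ε →
    ∃ n : ℕ, nrm (T^[n] f₁ - g₁) < ε ∧ nrm (T^[n] f₂ - g₂) < ε

/-- `T` is (topologically) mixing on the space `{f | mem f}`. -/
def MixingOn {V 𝕂 : Type*} [RCLike 𝕂] (T : (V → 𝕂) → (V → 𝕂))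
    (mem : (V → 𝕂) → Prop) (nrm : (V → 𝕂) → ℝ≥0∞) : Prop :=
  ∀ f g, mem f → mem g → ∀ ε : ℝ≥0∞, 0 < ε →
    ∃ N : ℕ, ∀ n ≥ N, ∃ h, mem h ∧ nrm (h - f) < ε ∧ nrm (T^[n] h - g) < ε


/-- The unrooted directed tree has a free left end: some vertex `v` is alone in its
generation together with all of its ancestors, i.e. `Chi^n(par^n(v)) = {v}` for all `n`
and the generation of each ancestor is a singleton. -/
def DirTree.FreeLeftEnd {V : Type*} (t : DirTree V) : Prop :=
  ∃ v : V, ∀ (k m : ℕ) (u : V),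
    parIter t.par m u = parIter t.par (m + k) v → some u = parIter t.par k v

/-!
If `v` witnesses the free left end, every ancestor `par^(j+1) v` has `par^j v` as its only
child, so `(λB)^d f (par^d v) = λ^d f(v)`: for `|λ| ≥ 1` a value at `v` is never damped along the
ancestors of `v`. A dense orbit comes within `1` of both `2δ_v` and `4δ_v`, necessarily at
different times `n < m`; then `(λB)^m f` has modulus `> 1` at `par^(m-n) v ≠ v`, where the target
it approximates vanishes.
-/

section Lp

variable {V 𝕂 : Type*} [RCLike 𝕂]

theorem enorm_mul_apply_le_enormW (μ : V → 𝕂) {p : ℝ≥0∞} (hp : p ≠ 0) (f : V → 𝕂) (v : V) :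
    ‖μ v * f v‖ₑ ≤ enormW μ p f := by
  rw [enormW]
  split_ifs with htop
  · exact le_iSup (fun w => (‖μ w * f w‖₊ : ℝ≥0∞)) v
  · have hpt : 0 < p.toReal := ENNReal.toReal_pos hp htop
    calc ‖μ v * f v‖ₑ = ((‖μ v * f v‖₊ : ℝ≥0∞) ^ p.toReal) ^ (1 / p.toReal) := by
          rw [← ENNReal.rpow_mul, mul_one_div_cancel hpt.ne', ENNReal.rpow_one]; rfl
      _ ≤ _ := by gcongr; exact ENNReal.le_tsum v

theorem enormW_single [DecidableEq V] (μ : V → 𝕂) {p : ℝ≥0∞} (hp : p ≠ 0) (v : V) (b : 𝕂) :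
    enormW μ p (Pi.single v b : V → 𝕂) = ‖μ v * b‖ₑ := by
  have hzero : ∀ w, w ≠ v → (‖μ w * (Pi.single v b : V → 𝕂) w‖₊ : ℝ≥0∞) = 0 := fun w hw => by
    rw [Pi.single_eq_of_ne hw, mul_zero, nnnorm_zero, ENNReal.coe_zero]
  rw [enormW]
  split_ifs with htop
  · refine le_antisymm (iSup_le fun w => ?_) (le_iSup_of_le v ?_)
    · rcases eq_or_ne w v with rfl | hw
      · rw [Pi.single_eq_same]; rfl
      · rw [hzero w hw]; exact zero_le
    · rw [Pi.single_eq_same]; rfl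
  · have hpt : 0 < p.toReal := ENNReal.toReal_pos hp htop
    rw [tsum_eq_single v fun w hw => by rw [hzero w hw, ENNReal.zero_rpow_of_pos hpt],
      Pi.single_eq_same, ← ENNReal.rpow_mul, mul_one_div_cancel hpt.ne', ENNReal.rpow_one]
    rfl

theorem memWLp_single [DecidableEq V] (μ : V → 𝕂) {p : ℝ≥0∞} (hp : p ≠ 0) (v : V) (b : 𝕂) :
    MemWLp μ p (Pi.single v b : V → 𝕂) := by
  rw [MemWLp, enormW_single μ hp]
  exact enorm_ne_top

end Lp

section Hypercyclic

variable {V 𝕂 : Type*} [RCLike 𝕂]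

theorem not_hypercyclicOn_of_norm_apply_le_norm_iterate_apply [DecidableEq V]
    {T : (V → 𝕂) → (V → 𝕂)} {mem : (V → 𝕂) → Prop} {nrm : (V → 𝕂) → ℝ≥0∞}
    (hcoord : ∀ f w, ‖f w‖ₑ ≤ nrm f) {v : V} (hsingle : ∀ b, mem (Pi.single v b : V → 𝕂))
    {a : ℕ → V} (ha : ∀ d, 0 < d → a d ≠ v) (hgrowth : ∀ f d, ‖f v‖ ≤ ‖T^[d] f (a d)‖) :
    ¬ HypercyclicOn T mem nrm := by
  rintro ⟨f, -, hdense⟩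
  have happrox (b : 𝕂) : ∃ n, ∀ w, ‖T^[n] f w - (Pi.single v b : V → 𝕂) w‖ < 1 := by
    obtain ⟨n, hn⟩ := hdense _ (hsingle b) 1 one_pos
    refine ⟨n, fun w => ?_⟩
    have hw := (hcoord _ w).trans_lt hn
    rw [← ENNReal.coe_one, enorm_lt_coe, ← NNReal.coe_lt_coe] at hw
    exact hw
  have hlate {n m : ℕ} {b b' : 𝕂} (hnm : n < m)
      (hn : ∀ w, ‖T^[n] f w - (Pi.single v b : V → 𝕂) w‖ < 1)
      (hm : ∀ w, ‖T^[m] f w - (Pi.single v b' : V → 𝕂) w‖ < 1) (hb : 2 ≤ ‖b‖) : False := by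
    obtain ⟨d, rfl⟩ : ∃ d, m = d + n := ⟨m - n, by omega⟩
    have hv : 1 < ‖T^[n] f v‖ := by
      have hclose := hn v
      rw [Pi.single_eq_same, norm_sub_rev] at hclose
      linarith [norm_sub_norm_le b (T^[n] f v)]
    have had := hm (a d)
    rw [Pi.single_eq_of_ne (ha d (by omega)), sub_zero, Function.iterate_add_apply] at had
    linarith [hgrowth (T^[n] f) d]
  obtain ⟨n₂, h₂⟩ := happrox 2
  obtain ⟨n₄, h₄⟩ := happrox 4
  rcases lt_trichotomy n₂ n₄ with hlt | rfl | hgt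
  · exact hlate hlt h₂ h₄ (by norm_num)
  · have h2 := h₂ v
    have h4 := h₄ v
    rw [Pi.single_eq_same] at h2 h4
    have htri := norm_sub_le (T^[n₂] f v - 2) (T^[n₂] f v - 4)
    rw [sub_sub_sub_cancel_left, show (4 : 𝕂) - 2 = 2 by norm_num, RCLike.norm_ofNat] at htri
    linarith
  · exact hlate hgt h₄ h₂ (by norm_num)

end Hypercyclic

namespace DirTree

variable {V : Type*} {t : DirTree V}

theorem parIter_one (v : V) : parIter t.par 1 v = t.par v := by
  rw [parIter]
  cases t.par v <;> rfl

variable (t) in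
noncomputable def parent (hur : t.Unrooted) (v : V) : V :=
  (t.par v).get (Option.ne_none_iff_isSome.mp (hur v))

theorem par_eq_some_parent (hur : t.Unrooted) (v : V) : t.par v = some (t.parent hur v) :=
  (Option.some_get _).symm

theorem parIter_eq_some_iterate_parent (hur : t.Unrooted) (n : ℕ) (v : V) :
    parIter t.par n v = some ((t.parent hur)^[n] v) := by
  induction n generalizing v with
  | zero => rfl
  | succ n ih =>
    rw [parIter, par_eq_some_parent hur, Option.bind_some, ih, Function.iterate_succ_apply]

theorem iterate_parent_succ_ne (hur : t.Unrooted) (n : ℕ) (v : V) :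
    (t.parent hur)^[n + 1] v ≠ v := fun h =>
  t.acyclic v n (by rw [parIter_eq_some_iterate_parent hur, h])

theorem FreeLeftEnd.exists_children_iterate_parent (hur : t.Unrooted) (hfle : t.FreeLeftEnd) :
    ∃ v, ∀ j, t.children ((t.parent hur)^[j + 1] v) = {(t.parent hur)^[j] v} := by
  obtain ⟨v, hv⟩ := hfle
  refine ⟨v, fun j => Set.ext fun u => ⟨fun hu => ?_, ?_⟩⟩
  · have hpar : parIter t.par 1 u = parIter t.par (1 + j) v := by
      rw [parIter_one, hu, parIter_eq_some_iterate_parent hur, add_comm]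
    have := hv j 1 u hpar
    rw [parIter_eq_some_iterate_parent hur] at this
    exact Option.some_injective _ this
  · rintro rfl
    change t.par _ = _
    rw [par_eq_some_parent hur, ← Function.iterate_succ_apply' (t.parent hur)]

variable {𝕂 : Type*} [RCLike 𝕂]

theorem bshift_apply_of_children_eq_singleton {lam f : V → 𝕂} {w u : V}
    (h : t.children w = {u}) : t.bshift lam f w = lam u * f u := by
  rw [bshift, h]
  exact tsum_singleton u fun u => lam u * f u

theorem bshift_const_iterate_apply {a : ℕ → V} (ha : ∀ j, t.children (a (j + 1)) = {a j})
    (c : 𝕂) (f : V → 𝕂) (n : ℕ) :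
    (t.bshift fun _ => c)^[n] f (a n) = c ^ n * f (a 0) := by
  induction n with
  | zero => simp
  | succ n ih =>
    rw [Function.iterate_succ_apply', bshift_apply_of_children_eq_singleton (ha n), ih, pow_succ',
      mul_assoc]

end DirTree

theorem stmt18_general {V : Type*} {𝕂 : Type*} [RCLike 𝕂] (t : DirTree V)
    (hur : t.Unrooted) (hfle : t.FreeLeftEnd)
    (c : 𝕂) (hc : 1 ≤ ‖c‖)
    (p : ℝ≥0∞) (hp : 1 < p) :
    ¬ HypercyclicOn (t.bshift (fun _ => c)) (MemWLp (fun _ => (1 : 𝕂)) p)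
        (enormW (fun _ => (1 : 𝕂)) p) := by
  classical
  obtain ⟨v, hv⟩ := hfle.exists_children_iterate_parent hur
  have hp0 : p ≠ 0 := (zero_lt_one.trans hp).ne'
  refine not_hypercyclicOn_of_norm_apply_le_norm_iterate_apply
    (fun f w => by simpa using enorm_mul_apply_le_enormW (fun _ => (1 : 𝕂)) hp0 f w)
    (memWLp_single _ hp0 v) (a := fun d => (t.parent hur)^[d] v) ?_ fun f d => ?_
  · rintro (_ | d) hd
    · omega
    · exact DirTree.iterate_parent_succ_ne hur d v
  · rw [DirTree.bshift_const_iterate_apply (a := fun d => (t.parent hur)^[d] v) hv, norm_mul,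
      norm_pow]
    exact le_mul_of_one_le_left (norm_nonneg _) (one_le_pow₀ hc)

/-- on an unrooted leafless directed tree with a free left end, if
`|λ| ≥ 1` then the Rolewicz operator `λB` (bounded on `ℓ^p(V)`, `1 < p < ∞`) is not
hypercyclic. -/
theorem stmt18 {V : Type*} [Countable V] {𝕂 : Type*} [RCLike 𝕂] (t : DirTree V)
    (hur : t.Unrooted) (hleafless : t.Leafless) (hfle : t.FreeLeftEnd)
    (c : 𝕂) (hc : 1 ≤ ‖c‖)
    (p : ℝ≥0∞) (hp : 1 < p) (hp' : p ≠ ∞)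
    (hbd : BoundedOn (t.bshift (fun _ => c)) (enormW (fun _ => (1 : 𝕂)) p)) :
    ¬ HypercyclicOn (t.bshift (fun _ => c)) (MemWLp (fun _ => (1 : 𝕂)) p)
        (enormW (fun _ => (1 : 𝕂)) p) :=
  stmt18_general t hur hfle c hc p hp
end

section
/- Let (V,E) be a rooted, leafless directed tree and λ a weight such that B_λ is a bounded operator on ℓ^p(V), 1 ≤ p < ∞. If B_λ is hypercyclic, then there is an increasing sequence (n_k) of positive integers such that for each v ∈ V, Λ_{v,n_k} := ∑_{u ∈ Chi^{n_k}(v)} |λ(v→u)| → ∞ as k → ∞. -/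
/-! The estimate `|(B_λⁿ f)(v)| ≤ Λ_{v,n} ‖f‖_∞ ≤ Λ_{v,n} ‖f‖_p` turns the large values that a
hypercyclic vector must take under `B_λⁿ`, on any finite set of vertices, into large values of
`Λ_{v,n}`; a diagonal extraction over an exhaustion of the countable set `V` by finite sets then
produces one sequence `(n_k)` that works for every vertex. -/

open scoped ENNReal
open Filter

open Topology

namespace DirTree

variable {V : Type*} (t : DirTree V) {𝕂 : Type*} [RCLike 𝕂] (lam : V → 𝕂)

noncomputable def weightKernel (n : ℕ) (v : V) : V → ℝ≥0∞ :=
  (t.desc n v).indicator fun u => ‖t.wprod lam n u‖ₑ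

lemma wprod_succ (n : ℕ) {u w : V} (h : t.par u = some w) :
    t.wprod lam (n + 1) u = t.wprod lam n w * lam u := by
  have hpar : ∀ k, parIter t.par (k + 1) u = parIter t.par k w := fun k => by
    simp [parIter, h]
  rw [wprod, wprod, Finset.prod_range_succ']
  simp only [hpar]
  rfl

lemma weightKernel_succ (n : ℕ) (v c : V) :
    t.weightKernel lam (n + 1) v c =
      ∑' u, t.weightKernel lam n v u * (t.children u).indicator (fun c => ‖lam c‖ₑ) c := by
  rcases hc : t.par c with _ | w
  · have hnot : c ∉ t.desc (n + 1) v := by simp [desc, parIter, hc]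
    simp [weightKernel, Set.indicator_of_notMem hnot, children, hc]
  · rw [tsum_eq_single w fun u hu => by simp [children, hc, Ne.symm hu]]
    have hdesc : c ∈ t.desc (n + 1) v ↔ w ∈ t.desc n v := by simp [desc, parIter, hc]
    by_cases hw : w ∈ t.desc n v
    · simp [weightKernel, hw, hdesc.2 hw, children, hc, wprod_succ t lam n hc, enorm_mul]
    · simp [weightKernel, hw, mt hdesc.1 hw]

lemma enorm_bshift_le (g : V → 𝕂) (v : V) :
    ‖t.bshift lam g v‖ₑ ≤ ∑' c, (t.children v).indicator (fun c => ‖lam c‖ₑ) c * ‖g c‖ₑ := by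
  refine enorm_tsum_le_tsum_enorm.trans_eq ?_
  rw [tsum_subtype (t.children v) fun c => ‖lam c * g c‖ₑ]
  refine tsum_congr fun c => ?_
  by_cases hc : c ∈ t.children v <;> simp [hc, enorm_mul]

lemma enorm_bshift_iterate_le (n : ℕ) (f : V → 𝕂) (v : V) :
    ‖(t.bshift lam)^[n] f v‖ₑ ≤ ∑' u, t.weightKernel lam n v u * ‖f u‖ₑ := by
  induction n generalizing f with
  | zero =>
    refine le_of_eq_of_le ?_ (ENNReal.le_tsum v)
    simp [weightKernel, desc, parIter, wprod]
  | succ n ih =>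
    calc ‖(t.bshift lam)^[n + 1] f v‖ₑ
        ≤ ∑' u, t.weightKernel lam n v u * ‖t.bshift lam f u‖ₑ := ih (t.bshift lam f)
      _ ≤ ∑' u, t.weightKernel lam n v u *
            ∑' c, (t.children u).indicator (fun c => ‖lam c‖ₑ) c * ‖f c‖ₑ := by
        gcongr with u
        exact t.enorm_bshift_le lam f u
      _ = ∑' c, t.weightKernel lam (n + 1) v c * ‖f c‖ₑ := by
        simp_rw [← ENNReal.tsum_mul_left, weightKernel_succ, ← ENNReal.tsum_mul_right, mul_assoc]
        exact ENNReal.tsum_comm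

lemma enorm_bshift_iterate_le_mul (n : ℕ) {f : V → 𝕂} {C : ℝ≥0∞} (hf : ∀ u, ‖f u‖ₑ ≤ C)
    (v : V) :
    ‖(t.bshift lam)^[n] f v‖ₑ ≤ (∑' u : t.desc n v, ‖t.wprod lam n u‖ₑ) * C := by
  rw [tsum_subtype (t.desc n v) fun u => ‖t.wprod lam n u‖ₑ, ← ENNReal.tsum_mul_right]
  exact (t.enorm_bshift_iterate_le lam n f v).trans
    (ENNReal.tsum_le_tsum fun u => mul_le_mul' le_rfl (hf u))

end DirTree

section WeightedLp

variable {V 𝕂 : Type*} [RCLike 𝕂] {p : ℝ≥0∞}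

lemma enorm_apply_le_enormW (hp0 : p ≠ 0) (hp : p ≠ ∞) (f : V → 𝕂) (v : V) :
    ‖f v‖ₑ ≤ enormW (fun _ => (1 : 𝕂)) p f := by
  have hpos : 0 < p.toReal := ENNReal.toReal_pos hp0 hp
  rw [enormW, if_neg hp]
  calc ‖f v‖ₑ = (‖f v‖ₑ ^ p.toReal) ^ (1 / p.toReal) := by
        rw [← ENNReal.rpow_mul, mul_one_div_cancel hpos.ne', ENNReal.rpow_one]
    _ ≤ (∑' u, (‖(1 : 𝕂) * f u‖₊ : ℝ≥0∞) ^ p.toReal) ^ (1 / p.toReal) := by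
        gcongr
        simp only [one_mul]
        exact ENNReal.le_tsum v

lemma memWLp_of_forall_notMem_eq_zero (hp0 : p ≠ 0) (hp : p ≠ ∞) {f : V → 𝕂} (s : Finset V)
    (hf : ∀ v ∉ s, f v = 0) : MemWLp (fun _ => (1 : 𝕂)) p f := by
  have hpos : 0 < p.toReal := ENNReal.toReal_pos hp0 hp
  rw [MemWLp, enormW, if_neg hp, tsum_eq_sum (s := s) fun v hv => by simp [hf v hv, hpos]]
  refine ENNReal.rpow_ne_top_of_nonneg (by positivity) (ENNReal.sum_ne_top.2 fun v _ => ?_)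
  exact ENNReal.rpow_ne_top_of_nonneg hpos.le ENNReal.coe_ne_top

lemma frequently_lt_enorm_iterate_apply (hp0 : p ≠ 0) (hp : p ≠ ∞) {T : (V → 𝕂) → (V → 𝕂)}
    {f : V → 𝕂} (hf : ∀ g, MemWLp (fun _ => (1 : 𝕂)) p g → ∀ ε : ℝ≥0∞, 0 < ε →
      ∃ n : ℕ, enormW (fun _ => (1 : 𝕂)) p (T^[n] f - g) < ε)
    (s : Finset V) {M : ℝ≥0∞} (hM : M ≠ ∞) :
    ∃ᶠ m in atTop, ∀ v ∈ s, M < ‖T^[m] f v‖ₑ := by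
  classical
  refine frequently_atTop.2 fun N => ?_
  rcases s.eq_empty_or_nonempty with rfl | ⟨v₀, hv₀⟩
  · exact ⟨N, le_rfl, by simp⟩
  -- `B` bounds the first `N` orbit values on `s`, so exceeding `M + B` on `s` forces `m ≥ N`
  set B := ∑ v ∈ s, ∑ j ∈ Finset.range N, ‖T^[j] f v‖ₑ
  have hB : B ≠ ∞ := ENNReal.sum_ne_top.2 fun v _ => ENNReal.sum_ne_top.2 fun j _ => enorm_ne_top
  obtain ⟨R, hR⟩ := ENNReal.exists_nat_gt (by finiteness : M + B + 1 ≠ ∞)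
  let g : V → 𝕂 := fun v => if v ∈ s then (R : 𝕂) else 0
  obtain ⟨m, hm⟩ := hf g (memWLp_of_forall_notMem_eq_zero hp0 hp s fun v hv => if_neg hv) 1
    zero_lt_one
  have hlarge : ∀ v ∈ s, M + B < ‖T^[m] f v‖ₑ := by
    intro v hv
    have hRle : (R : ℝ≥0∞) ≤ ‖T^[m] f v‖ₑ + 1 :=
      calc (R : ℝ≥0∞) = ‖T^[m] f v - (T^[m] f - g) v‖ₑ := by simp [g, hv, enorm_eq_nnnorm]
        _ ≤ ‖T^[m] f v‖ₑ + ‖(T^[m] f - g) v‖ₑ := enorm_sub_le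
        _ ≤ ‖T^[m] f v‖ₑ + 1 := by
          gcongr
          exact (enorm_apply_le_enormW hp0 hp _ v).trans hm.le
    exact (ENNReal.add_lt_add_iff_right ENNReal.one_ne_top).1 (hR.trans_le hRle)
  refine ⟨m, ?_, fun v hv => le_self_add.trans_lt (hlarge v hv)⟩
  by_contra! hmN
  have hle : ‖T^[m] f v₀‖ₑ ≤ B :=
    (Finset.single_le_sum (f := fun j => ‖T^[j] f v₀‖ₑ) (fun _ _ => zero_le)
      (Finset.mem_range.2 hmN)).trans
      (Finset.single_le_sum (f := fun v => ∑ j ∈ Finset.range N, ‖T^[j] f v‖ₑ)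
        (fun _ _ => zero_le) hv₀)
  exact (hlarge v₀ hv₀).not_ge (hle.trans le_add_self)

end WeightedLp

lemma DirTree.frequently_le_tsum_wprod {V 𝕂 : Type*} [RCLike 𝕂] (t : DirTree V) (lam : V → 𝕂)
    {p : ℝ≥0∞} (hp0 : p ≠ 0) (hp : p ≠ ∞)
    (hhc : HypercyclicOn (t.bshift lam) (MemWLp (fun _ => (1 : 𝕂)) p)
      (enormW (fun _ => (1 : 𝕂)) p)) (s : Finset V) (M : ℕ) :
    ∃ᶠ m in atTop, ∀ v ∈ s, (M : ℝ≥0∞) ≤ ∑' u : t.desc m v, ‖t.wprod lam m u‖ₑ := by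
  obtain ⟨f, hf, hdense⟩ := hhc
  set F := enormW (fun _ => (1 : 𝕂)) p f
  refine (frequently_lt_enorm_iterate_apply hp0 hp hdense s
    (ENNReal.mul_ne_top (ENNReal.natCast_ne_top M) hf)).mono fun m hm v hv => ?_
  have hlt : M * F < (∑' u : t.desc m v, ‖t.wprod lam m u‖ₑ) * F :=
    (hm v hv).trans_le (t.enorm_bshift_iterate_le_mul lam m (enorm_apply_le_enormW hp0 hp f) v)
  have hF0 : F ≠ 0 := by
    rintro hF
    simp [hF] at hlt
  exact (ENNReal.mul_lt_mul_iff_left hF0 hf).1 hlt |>.le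

lemma exists_strictMono_tendsto_top_of_frequently {V : Type*} [Countable V]
    (Λ : ℕ → V → ℝ≥0∞)
    (h : ∀ (s : Finset V) (M : ℕ), ∃ᶠ m in atTop, ∀ v ∈ s, (M : ℝ≥0∞) ≤ Λ m v) :
    ∃ n : ℕ → ℕ, StrictMono n ∧ (∀ k, 0 < n k) ∧
      ∀ v, Tendsto (fun k => Λ (n k) v) atTop (𝓝 ⊤) := by
  obtain ⟨s, hs⟩ := exists_seq_tendsto (atTop : Filter (Finset V))
  obtain ⟨n, hmono, hn⟩ := extraction_forall_of_frequently fun k =>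
    ((h (s k) k).and_eventually (eventually_gt_atTop 0)).mono fun _ hm => hm.symm
  refine ⟨n, hmono, fun k => (hn k).1, fun v => ENNReal.tendsto_nhds_top_iff_nat.2 fun K => ?_⟩
  filter_upwards [tendsto_atTop.1 hs {v}, eventually_gt_atTop K] with k hvk hKk
  exact (Nat.cast_lt.2 hKk).trans_le ((hn k).2 v (Finset.singleton_subset_iff.1 hvk))

theorem stmt19_general {V : Type*} [Countable V] {𝕂 : Type*} [RCLike 𝕂] (t : DirTree V)
    (lam : V → 𝕂)
    (p : ℝ≥0∞) (hp : 1 ≤ p) (hp' : p ≠ ∞)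
    (hhc : HypercyclicOn (t.bshift lam) (MemWLp (fun _ => (1 : 𝕂)) p)
        (enormW (fun _ => (1 : 𝕂)) p)) :
    ∃ n : ℕ → ℕ, StrictMono n ∧ (∀ k, 0 < n k) ∧ ∀ v : V,
      Filter.Tendsto
        (fun k => ∑' u : t.desc (n k) v, (‖t.wprod lam (n k) u.1‖₊ : ℝ≥0∞))
        Filter.atTop (nhds ⊤) :=
  exists_strictMono_tendsto_top_of_frequently _
    (t.frequently_le_tsum_wprod lam (zero_lt_one.trans_le hp).ne' hp' hhc)

/-- for a rooted leafless directed tree and `B_λ` bounded on `ℓ^p(V)`,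
`1 ≤ p < ∞`: if `B_λ` is hypercyclic, then there is an increasing sequence `(n_k)` of
positive integers such that for each `v`,
`Λ_{v,n_k} = ∑_{u ∈ Chi^{n_k}(v)} |λ(v→u)| → ∞`. -/
theorem stmt19 {V : Type*} [Countable V] {𝕂 : Type*} [RCLike 𝕂] (t : DirTree V)
    (hroot : t.Rooted) (hleafless : t.Leafless)
    (lam : V → 𝕂) (hlam : ∀ v, lam v ≠ 0)
    (p : ℝ≥0∞) (hp : 1 ≤ p) (hp' : p ≠ ∞)
    (hbd : BoundedOn (t.bshift lam) (enormW (fun _ => (1 : 𝕂)) p))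
    (hhc : HypercyclicOn (t.bshift lam) (MemWLp (fun _ => (1 : 𝕂)) p)
        (enormW (fun _ => (1 : 𝕂)) p)) :
    ∃ n : ℕ → ℕ, StrictMono n ∧ (∀ k, 0 < n k) ∧ ∀ v : V,
      Filter.Tendsto
        (fun k => ∑' u : t.desc (n k) v, (‖t.wprod lam (n k) u.1‖₊ : ℝ≥0∞))
        Filter.atTop (nhds ⊤) :=
  stmt19_general t lam p hp hp' hhc
end
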